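/- For x ∈ ℝ^n and 1 ≤ k ≤ n, the sum of the n−k+1 largest entries of x equals the minimum of (n−k+1)·t + ∑_{i=1}^n v_i over all t ∈ ℝ and v ∈ ℝ^n with v_i ≥ 0 and t + v_i ≥ x_i for all i. -/
import Mathlib


open Finset

/-- The nondecreasing rearrangement of `x`. -/
noncomputable def sortedVec {n : ℕ} (x : Fin n → ℝ) : Fin n → ℝ :=
  x ∘ Tuple.sort x

/-- The sum of the `n-k+1` largest entries of `x` is the minimum of
`(n-k+1)·t + ∑ v_i` over `t ∈ ℝ`, `v ≥ 0` with `t + v_i ≥ x_i` for all `i`. -/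
theorem ksum_eq_min_lp (n k : ℕ) (hk1 : 1 ≤ k) (hkn : k ≤ n) (x : Fin n → ℝ) :
    IsLeast
      { s : ℝ | ∃ (t : ℝ) (v : Fin n → ℝ), (∀ i, 0 ≤ v i) ∧
          (∀ i, x i ≤ t + v i) ∧ s = ((n : ℝ) - k + 1) * t + ∑ i, v i }
      (∑ i : Fin n, if k ≤ (i : ℕ) + 1 then sortedVec x i else 0) := by
  set σ := Tuple.sort x with hσ
  have hmono : Monotone (sortedVec x) := Tuple.monotone_sort x
  have hn : 0 < n := lt_of_lt_of_le hk1 hkn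
  set j : Fin n := ⟨k - 1, by omega⟩ with hj
  have hiff : ∀ i : Fin n, (k ≤ (i : ℕ) + 1) ↔ j ≤ i := by
    intro i
    simp only [hj, Fin.le_def]
    omega
  set F : Finset (Fin n) := Finset.univ.filter (fun i => k ≤ (i : ℕ) + 1) with hF
  have hFIci : F = Finset.Ici j := by
    ext i
    simp [hF, hiff i]
  have hcard : F.card = n - (k - 1) := by
    rw [hFIci, Fin.card_Ici]
  have hcardR : (F.card : ℝ) = (n : ℝ) - k + 1 := by
    rw [hcard]
    have : (n : ℝ) - k + 1 = ((n - (k-1) : ℕ) : ℝ) := by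
      push_cast [Nat.cast_sub (by omega : k - 1 ≤ n), Nat.cast_sub hk1]
      ring
    rw [this]
  have hsum_filter : (∑ i : Fin n, if k ≤ (i : ℕ) + 1 then sortedVec x i else 0)
      = ∑ i ∈ F, sortedVec x i := by
    rw [Finset.sum_filter]
  set t₀ : ℝ := sortedVec x j with ht₀
  constructor
  · -- membership : achieved by t = t₀, v i = max (x i - t₀) 0
    refine ⟨t₀, fun i => max (x i - t₀) 0, fun i => le_max_right _ _, fun i => ?_, ?_⟩
    · have := le_max_left (x i - t₀) 0
      linarith
    · have hv : ∑ i : Fin n, max (x i - t₀) 0 = ∑ i : Fin n, max (sortedVec x i - t₀) 0 := by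
        rw [← Equiv.sum_comp σ (fun i => max (x i - t₀) 0)]
        rfl
      have hv2 : ∑ i : Fin n, max (sortedVec x i - t₀) 0
          = ∑ i : Fin n, (if k ≤ (i : ℕ) + 1 then sortedVec x i - t₀ else 0) := by
        refine Finset.sum_congr rfl fun i _ => ?_
        by_cases h : k ≤ (i : ℕ) + 1
        · have : t₀ ≤ sortedVec x i := hmono ((hiff i).mp h)
          rw [if_pos h, max_eq_left (by linarith)]
        · have hij : i ≤ j := by
            simp only [hj, Fin.le_def]; omega
          have : sortedVec x i ≤ t₀ := hmono hij
          rw [if_neg h, max_eq_right (by linarith)]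
      rw [hv, hv2, hsum_filter, ← Finset.sum_filter, ← hF]
      have : ∑ i ∈ F, (sortedVec x i - t₀) = (∑ i ∈ F, sortedVec x i) - F.card * t₀ := by
        rw [Finset.sum_sub_distrib, Finset.sum_const, nsmul_eq_mul]
      rw [this, hcardR]
      ring
  · -- lower bound
    rintro s ⟨t, v, hv0, hxv, rfl⟩
    rw [hsum_filter]
    have hstep : ∑ i ∈ F, sortedVec x i ≤ ∑ i ∈ F, (t + v (σ i)) := by
      refine Finset.sum_le_sum fun i _ => ?_
      exact hxv (σ i)
    have h2 : ∑ i ∈ F, (t + v (σ i)) = F.card * t + ∑ i ∈ F, v (σ i) := by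
      rw [Finset.sum_add_distrib, Finset.sum_const, nsmul_eq_mul]
    have h3 : ∑ i ∈ F, v (σ i) ≤ ∑ i : Fin n, v (σ i) := by
      refine Finset.sum_le_sum_of_subset_of_nonneg (Finset.subset_univ F) ?_
      intro i _ _; exact hv0 _
    have h4 : ∑ i : Fin n, v (σ i) = ∑ i, v i := Equiv.sum_comp σ v
    calc ∑ i ∈ F, sortedVec x i ≤ F.card * t + ∑ i ∈ F, v (σ i) := by
          rw [← h2]; exact hstep
      _ ≤ F.card * t + ∑ i, v i := by rw [← h4]; linarith
      _ = ((n : ℝ) - k + 1) * t + ∑ i, v i := by rw [hcardR]
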